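/- arXiv:1410.5788 — 3 statements merged into one kernel-verified Lean document; each statement's English description precedes it below -/
import Mathlib

section
/- The improper iterated integral ∫₀^∞ (sin u / u)·(∫₀^u sin(v)cos(v)/v dv) du equals the improper iterated integral ∫₀^∞ (cos(u)·sin(u)/u)·(∫_u^∞ sin(v)/v dv) du, where ∫_u^∞ sin(v)/v dv denotes lim_{B→∞} ∫_u^B sin(v)/v dv and each outer integral over (0, ∞) is understood as the improper limit lim_{T→∞} of the integral over (0, T]. -/
/-!
Write `S u = ∫_u^∞ sinc` and `F u = ∫_0^u sinc v cos v dv`. Since `S' = -sinc` and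
`F' = sinc · cos`, integrating by parts on `[0, T]` gives
`∫_0^T sinc · F = ∫_0^T sinc · cos · S - S T · F T`, and the boundary term vanishes as `T → ∞`
because `S → 0` while `F` converges. The remaining integral converges absolutely: integrating by
parts against the bounded primitive `-cos` shows `|S u| ≤ 2 / u`, so the integrand is `O(1 / u²)`.
-/

open Real Filter MeasureTheory Set intervalIntegral Topology

lemma intervalIntegral_congr_of_ne_zero {f g : ℝ → ℝ} (h : ∀ x ≠ 0, f x = g x) (a b : ℝ) :
    ∫ x in a..b, f x = ∫ x in a..b, g x := by
  refine integral_congr_ae ?_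
  filter_upwards [measure_eq_zero_iff_ae_notMem.mp (Real.volume_singleton (a := 0))]
    with x hx _ using h x hx

lemma tendsto_intervalIntegral_atTop_change_base {f : ℝ → ℝ} (hf : Continuous f) {a l : ℝ}
    (h : Tendsto (fun B => ∫ x in a..B, f x) atTop (𝓝 l)) (b : ℝ) :
    Tendsto (fun B => ∫ x in b..B, f x) atTop (𝓝 ((∫ x in b..a, f x) + l)) :=
  (h.const_add _).congr fun _ =>
    integral_add_adjacent_intervals (hf.intervalIntegrable _ _) (hf.intervalIntegrable _ _)

section InverseSquare

variable {f : ℝ → ℝ} {a C : ℝ}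

lemma integrableOn_Ioi_div_sq (ha : 0 < a) : IntegrableOn (fun v : ℝ => C / v ^ 2) (Ioi a) := by
  refine IntegrableOn.congr_fun
    ((integrableOn_Ioi_rpow_of_lt (by norm_num : (-2 : ℝ) < -1) ha).const_mul C)
    (fun v hv => ?_) measurableSet_Ioi
  rw [rpow_neg (ha.trans hv).le, rpow_two, div_eq_mul_inv]

lemma integral_Ioi_div_sq (ha : 0 < a) : ∫ v in Ioi a, C / v ^ 2 = C / a := by
  have h : ∀ v ∈ Ioi a, C / v ^ 2 = C * v ^ (-2 : ℝ) := fun v hv => by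
    rw [rpow_neg (ha.trans hv).le, rpow_two, div_eq_mul_inv]
  rw [setIntegral_congr_fun measurableSet_Ioi h, MeasureTheory.integral_const_mul,
    integral_Ioi_rpow_of_lt (by norm_num) ha]
  norm_num [rpow_neg_one]
  ring

lemma integrableOn_Ioi_of_norm_le_div_sq (ha : 0 < a) (hf : ContinuousOn f (Ioi a))
    (hC : ∀ v ∈ Ioi a, ‖f v‖ ≤ C / v ^ 2) : IntegrableOn f (Ioi a) :=
  (integrableOn_Ioi_div_sq ha).mono' (hf.aestronglyMeasurable measurableSet_Ioi)
    ((ae_restrict_iff' measurableSet_Ioi).mpr (.of_forall hC))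

lemma norm_integral_Ioi_le_of_norm_le_div_sq (ha : 0 < a)
    (hC : ∀ v ∈ Ioi a, ‖f v‖ ≤ C / v ^ 2) : ‖∫ v in Ioi a, f v‖ ≤ C / a := by
  rw [← integral_Ioi_div_sq ha]
  exact norm_integral_le_of_norm_le (integrableOn_Ioi_div_sq ha)
    ((ae_restrict_iff' measurableSet_Ioi).mpr (.of_forall hC))

lemma exists_tendsto_intervalIntegral_of_norm_le_div_sq (hf : Continuous f) (ha : 0 < a)
    (hC : ∀ v ∈ Ioi a, ‖f v‖ ≤ C / v ^ 2) (b : ℝ) :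
    ∃ L, Tendsto (fun T => ∫ x in b..T, f x) atTop (𝓝 L) :=
  ⟨_, tendsto_intervalIntegral_atTop_change_base hf (intervalIntegral_tendsto_integral_Ioi a
    (integrableOn_Ioi_of_norm_le_div_sq ha hf.continuousOn hC) tendsto_id) b⟩

end InverseSquare

section Dirichlet

variable {ψ Ψ : ℝ → ℝ} {M : ℝ}

lemma integral_div_id_eq_of_hasDerivAt (hΨ : ∀ x, HasDerivAt Ψ (ψ x) x) (hψ : Continuous ψ)
    {a b : ℝ} (ha : 0 < a) (hab : a ≤ b) :
    ∫ v in a..b, ψ v / v = Ψ b / b - Ψ a / a + ∫ v in a..b, Ψ v / v ^ 2 := by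
  have hne : ∀ x ∈ uIcc a b, x ≠ 0 := fun x hx =>
    (ha.trans_le (by rw [uIcc_of_le hab] at hx; exact hx.1)).ne'
  have hibp := integral_mul_deriv_eq_deriv_mul (fun x hx => hasDerivAt_inv (hne x hx))
    (fun x _ => hΨ x)
    (ContinuousOn.inv₀ (by fun_prop) fun x hx => pow_ne_zero 2 (hne x hx)).neg.intervalIntegrable
    (hψ.intervalIntegrable a b)
  simp only [neg_mul, intervalIntegral.integral_neg, sub_neg_eq_add] at hibp
  simp only [div_eq_inv_mul, ← inv_pow]
  simpa only [inv_pow] using hibp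

theorem exists_tendsto_integral_div_id_of_bounded_primitive (hψ : Continuous ψ)
    (hΨ : ∀ x, HasDerivAt Ψ (ψ x) x) (hM : ∀ x, |Ψ x| ≤ M) {u : ℝ} (hu : 0 < u) :
    ∃ l, Tendsto (fun B => ∫ v in u..B, ψ v / v) atTop (𝓝 l) ∧ |l| ≤ 2 * M / u := by
  have hΨc : Continuous Ψ := continuous_iff_continuousAt.mpr fun x => (hΨ x).continuousAt
  have hbound : ∀ v ∈ Ioi u, ‖Ψ v / v ^ 2‖ ≤ M / v ^ 2 := fun v _ => by
    rw [norm_div, norm_pow, Real.norm_eq_abs, Real.norm_eq_abs, sq_abs]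
    gcongr
    exact hM v
  have hint := integrableOn_Ioi_of_norm_le_div_sq hu
    (hΨc.continuousOn.div (by fun_prop) fun v hv => pow_ne_zero 2 (hu.trans hv).ne') hbound
  have hboundary : Tendsto (fun B => Ψ B / B) atTop (𝓝 0) := by
    refine squeeze_zero_norm' ?_ (tendsto_const_nhds (x := M) |>.div_atTop tendsto_id)
    filter_upwards [eventually_gt_atTop 0] with B hB
    rw [norm_div, Real.norm_eq_abs, Real.norm_eq_abs, abs_of_pos hB]
    exact div_le_div_of_nonneg_right (hM B) hB.le
  refine ⟨-(Ψ u / u) + ∫ v in Ioi u, Ψ v / v ^ 2, ?_, ?_⟩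
  · have h := (hboundary.sub_const (Ψ u / u)).add
      (intervalIntegral_tendsto_integral_Ioi u hint tendsto_id)
    rw [zero_sub] at h
    refine h.congr' ?_
    filter_upwards [eventually_ge_atTop u] with B hB
    exact (integral_div_id_eq_of_hasDerivAt hΨ hψ hu hB).symm
  · have hΨu : |Ψ u / u| ≤ M / u := by
      rw [abs_div, abs_of_pos hu]
      exact div_le_div_of_nonneg_right (hM u) hu.le
    calc |-(Ψ u / u) + ∫ v in Ioi u, Ψ v / v ^ 2|
        ≤ |Ψ u / u| + ‖∫ v in Ioi u, Ψ v / v ^ 2‖ :=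
          (abs_add_le _ _).trans_eq (by rw [abs_neg]; rfl)
      _ ≤ M / u + M / u := add_le_add hΨu (norm_integral_Ioi_le_of_norm_le_div_sq hu hbound)
      _ = 2 * M / u := by ring

end Dirichlet

theorem tendsto_integral_mul_primitive_of_tendsto {g k S : ℝ → ℝ} {a lF L : ℝ}
    (hg : Continuous g) (hk : Continuous k) (hS : ∀ x, HasDerivAt S (-g x) x)
    (hS0 : Tendsto S atTop (𝓝 0)) (hF : Tendsto (fun x => ∫ v in a..x, k v) atTop (𝓝 lF))
    (hL : Tendsto (fun T => ∫ u in a..T, k u * S u) atTop (𝓝 L)) :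
    Tendsto (fun T => ∫ u in a..T, g u * ∫ v in a..u, k v) atTop (𝓝 L) := by
  have hibp : ∀ T, ∫ u in a..T, g u * ∫ v in a..u, k v
      = (∫ u in a..T, k u * S u) - S T * ∫ v in a..T, k v := fun T => by
    have h := integral_mul_deriv_eq_deriv_mul (a := a) (b := T) (fun x _ => hS x)
      (fun x _ => (hk.integral_hasStrictDerivAt a x).hasDerivAt)
      (hg.neg.intervalIntegrable a T) (hk.intervalIntegrable a T)
    simp only [integral_same, mul_zero, sub_zero, neg_mul, intervalIntegral.integral_neg,
      sub_neg_eq_add] at h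
    simp only [mul_comm (k _)]
    linarith
  simpa [hibp] using hL.sub (hS0.mul hF)

namespace Real

noncomputable def sincTail (u : ℝ) : ℝ := limUnder atTop fun B => ∫ v in u..B, sinc v

lemma integral_sin_div_eq_integral_sinc (a b : ℝ) :
    ∫ v in a..b, sin v / v = ∫ v in a..b, sinc v :=
  intervalIntegral_congr_of_ne_zero (fun _ hx => (sinc_of_ne_zero hx).symm) a b

lemma exists_tendsto_integral_sin_div {u : ℝ} (hu : 0 < u) :
    ∃ l, Tendsto (fun B => ∫ v in u..B, sin v / v) atTop (𝓝 l) ∧ |l| ≤ 2 / u := by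
  simpa using exists_tendsto_integral_div_id_of_bounded_primitive (Ψ := fun y => -cos y)
    continuous_sin (fun x => by simpa only [neg_neg] using (hasDerivAt_cos x).fun_neg)
    (fun x => (abs_neg (cos x)).trans_le (abs_cos_le_one x)) hu

lemma tendsto_integral_sinc_sincTail (u : ℝ) :
    Tendsto (fun B => ∫ v in u..B, sinc v) atTop (𝓝 (sincTail u)) := by
  obtain ⟨l, hl, -⟩ := exists_tendsto_integral_sin_div one_pos
  simp only [integral_sin_div_eq_integral_sinc] at hl
  exact tendsto_nhds_limUnder
    ⟨_, tendsto_intervalIntegral_atTop_change_base continuous_sinc hl u⟩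

lemma sincTail_eq_sub (u : ℝ) : sincTail u = sincTail 0 - ∫ v in 0..u, sinc v := by
  refine tendsto_nhds_unique (tendsto_integral_sinc_sincTail u) ?_
  rw [sub_eq_neg_add, ← integral_symm]
  exact tendsto_intervalIntegral_atTop_change_base continuous_sinc
    (tendsto_integral_sinc_sincTail 0) u

lemma hasDerivAt_sincTail (x : ℝ) : HasDerivAt sincTail (-sinc x) x := by
  simpa using ((continuous_sinc.integral_hasStrictDerivAt 0 x).hasDerivAt.const_sub
    (sincTail 0)).congr_of_eventuallyEq (.of_forall sincTail_eq_sub)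

lemma tendsto_sincTail_atTop : Tendsto sincTail atTop (𝓝 0) := by
  simpa using ((tendsto_integral_sinc_sincTail 0).const_sub (sincTail 0)).congr
    fun u => (sincTail_eq_sub u).symm

lemma abs_sincTail_le {u : ℝ} (hu : 0 < u) : |sincTail u| ≤ 2 / u := by
  obtain ⟨l, hl, hlu⟩ := exists_tendsto_integral_sin_div hu
  simp only [integral_sin_div_eq_integral_sinc] at hl
  rwa [tendsto_nhds_unique (tendsto_integral_sinc_sincTail u) hl]

lemma abs_sinc_le_inv {x : ℝ} (hx : 0 < x) : |sinc x| ≤ x⁻¹ := by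
  rw [sinc_of_ne_zero hx.ne', abs_div, abs_of_pos hx, div_eq_mul_inv]
  exact mul_le_of_le_one_left (inv_nonneg.mpr hx.le) (abs_sin_le_one x)

lemma exists_tendsto_integral_sinc_mul_cos :
    ∃ l, Tendsto (fun T => ∫ v in 0..T, sinc v * cos v) atTop (𝓝 l) := by
  have hsc : ∀ x, HasDerivAt (fun y => sin y ^ 2 / 2) (sin x * cos x) x := fun x =>
    (((hasDerivAt_sin x).pow 2).div_const 2).congr_deriv (by push_cast; ring)
  obtain ⟨l, hl, -⟩ := exists_tendsto_integral_div_id_of_bounded_primitive (M := 1 / 2)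
    (continuous_sin.mul continuous_cos) hsc (fun x => by
      rw [abs_div, abs_two, abs_of_nonneg (sq_nonneg _)]
      exact div_le_div_of_nonneg_right (sin_sq_le_one x) zero_le_two) one_pos
  have hl' : Tendsto (fun B => ∫ v in 1..B, sinc v * cos v) atTop (𝓝 l) :=
    hl.congr fun B => intervalIntegral_congr_of_ne_zero (fun x hx => by
      rw [Pi.mul_apply, sinc_of_ne_zero hx]; ring) 1 B
  exact ⟨_, tendsto_intervalIntegral_atTop_change_base (by fun_prop) hl' 0⟩

lemma exists_tendsto_integral_sinc_mul_cos_mul_sincTail :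
    ∃ L, Tendsto (fun T => ∫ u in 0..T, sinc u * cos u * sincTail u) atTop (𝓝 L) := by
  have hcont : Continuous sincTail :=
    continuous_iff_continuousAt.mpr fun x => (hasDerivAt_sincTail x).continuousAt
  refine exists_tendsto_intervalIntegral_of_norm_le_div_sq (C := 2) (by fun_prop) one_pos
    (fun v hv => ?_) 0
  have hv0 : (0 : ℝ) < v := one_pos.trans hv
  rw [norm_mul, norm_mul, Real.norm_eq_abs, Real.norm_eq_abs, Real.norm_eq_abs]
  calc |sinc v| * |cos v| * |sincTail v| ≤ v⁻¹ * 1 * (2 / v) := by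
        gcongr
        exacts [abs_sinc_le_inv hv0, abs_cos_le_one v, abs_sincTail_le hv0]
    _ = 2 / v ^ 2 := by field_simp

end Real

/-- `∫₀^∞ (sin u / u)·(∫₀^u sin v cos v / v dv) du
= ∫₀^∞ (cos u · sin u / u)·(∫_u^∞ sin v / v dv) du`, where the tail integral
`∫_u^∞ sin v / v dv` is `lim_{B→∞} ∫_u^B sin v / v dv` and the outer improper
integrals are limits of `∫₀^T` as `T → ∞`; both exist and are equal. -/
theorem iterated_integrals_eq :
    ∃ S : ℝ → ℝ,
      (∀ u : ℝ,
        Tendsto (fun B : ℝ => ∫ v in u..B, Real.sin v / v) atTop (nhds (S u))) ∧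
      ∃ L : ℝ,
        Tendsto
          (fun T : ℝ => ∫ u in (0:ℝ)..T,
            (Real.sin u / u) * ∫ v in (0:ℝ)..u, Real.sin v * Real.cos v / v)
          atTop (nhds L) ∧
        Tendsto
          (fun T : ℝ => ∫ u in (0:ℝ)..T, (Real.cos u * Real.sin u / u) * S u)
          atTop (nhds L) := by
  refine ⟨sincTail, fun u => ?_, ?_⟩
  · simpa only [integral_sin_div_eq_integral_sinc] using tendsto_integral_sinc_sincTail u
  obtain ⟨lF, hF⟩ := exists_tendsto_integral_sinc_mul_cos
  obtain ⟨L, hL⟩ := exists_tendsto_integral_sinc_mul_cos_mul_sincTail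
  have hsin_cos : ∀ x ≠ 0, sin x * cos x / x = sinc x * cos x := fun x hx => by
    rw [sinc_of_ne_zero hx]; ring
  refine ⟨L, ?_, ?_⟩
  · refine (tendsto_integral_mul_primitive_of_tendsto continuous_sinc (by fun_prop)
      hasDerivAt_sincTail tendsto_sincTail_atTop hF hL).congr fun T =>
        intervalIntegral_congr_of_ne_zero (fun u hu => ?_) 0 T
    rw [sinc_of_ne_zero hu, intervalIntegral_congr_of_ne_zero hsin_cos]
  · refine hL.congr fun T => intervalIntegral_congr_of_ne_zero (fun u hu => ?_) 0 T
    rw [← hsin_cos u hu]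
    ring
end

section
/- For every ε > 0 the complex improper integrals K₋(ε) = lim_{A→∞} ∫_{−A}^0 e^{iω²/2}/(ω − iε) dω and K₊(ε) = lim_{A→∞} ∫_0^A e^{−iω²/2}/(ω − iε) dω exist, and lim_{ε→0+} (K₋(ε) + K₊(ε)) = iπ/2. -/
/-!
Substituting `ω ↦ -ω` turns the integrand of `K₋(ε)` into minus the conjugate of that of `K₊(ε)`,
so `K₋(ε) + K₊(ε) = 2i Im K₊(ε)`. The improper integral `K₊(ε)` exists because on `[1, ∞)` one can
integrate by parts against `e^{-iω²/2}`, whose derivative is `-iω e^{-iω²/2}`: with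
`u = i / (ω (ω - iε))` the integrand is `u · (e^{-iω²/2})'` and `u' = O(ω⁻³)`.

The imaginary part of the integrand is `(ε cos (ω²/2) - ω sin (ω²/2)) / (ω² + ε²)`. Scaling
`ω = εx` turns the first term into `∫₀^∞ cos (ε²x²/2) / (1 + x²) dx`. For the second, writing
`1 / (ω² + ε²) = ½ ∫₀^∞ e^{-s(ω² + ε²)/2} ds` and integrating first in `ω` (an elementary
integral, since `ω e^{cω²}` has an explicit primitive) gives `½ ∫₀^∞ e^{-sε²/2} / (1 + s²) ds`.
Both integrals are continuous in `ε` by dominated convergence, so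
`Im K₊(ε) → π/2 - π/4 = π/4` as `ε → 0⁺`.
-/

open Real Filter Complex MeasureTheory Set Topology
open scoped ComplexConjugate

section IntegrationByParts

variable {A : Type*} [NormedRing A] [NormedAlgebra ℝ A] [CompleteSpace A]
  {u v u' v' : ℝ → A} {a : ℝ} {L : A}

theorem tendsto_integral_mul_deriv_atTop (hu : ∀ x ∈ Ici a, HasDerivAt u (u' x) x)
    (hv : ∀ x ∈ Ici a, HasDerivAt v (v' x) x) (hu' : ContinuousOn u' (Ici a))
    (hv' : ContinuousOn v' (Ici a)) (hu'v : IntegrableOn (fun x ↦ u' x * v x) (Ioi a))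
    (huv : Tendsto (fun x ↦ u x * v x) atTop (𝓝 L)) :
    Tendsto (fun b ↦ ∫ x in a..b, u x * v' x) atTop
      (𝓝 (L - u a * v a - ∫ x in Ioi a, u' x * v x)) := by
  refine Tendsto.congr' ?_ ((huv.sub_const _).sub
    (intervalIntegral_tendsto_integral_Ioi a hu'v tendsto_id))
  filter_upwards [eventually_ge_atTop a] with b hb
  have hsub : uIcc a b ⊆ Ici a := by rw [uIcc_of_le hb]; exact Icc_subset_Ici_self
  exact (intervalIntegral.integral_mul_deriv_eq_deriv_mul (fun x hx ↦ hu x (hsub hx))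
    (fun x hx ↦ hv x (hsub hx)) ((hu'.mono hsub).intervalIntegrable)
    ((hv'.mono hsub).intervalIntegrable)).symm

end IntegrationByParts

theorem integral_mul_cexp_mul_sq {c : ℂ} (hc : c ≠ 0) (a b : ℝ) :
    ∫ x in a..b, (x : ℂ) * cexp (c * x ^ 2) = (cexp (c * b ^ 2) - cexp (c * a ^ 2)) / (2 * c) := by
  have hF (x : ℝ) :
      HasDerivAt (fun y : ℝ ↦ cexp (c * y ^ 2) / (2 * c)) (x * cexp (c * x ^ 2)) x := by
    have := ((hasDerivAt_pow 2 (x : ℂ)).const_mul c).cexp.div_const (2 * c) |>.comp_ofReal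
    convert this using 1
    field_simp
    push_cast
    ring
  rw [intervalIntegral.integral_eq_sub_of_hasDerivAt (fun x _ ↦ hF x)
    (Continuous.intervalIntegrable (by fun_prop) a b), sub_div]

theorem continuous_integral_mul_of_norm_le {X α : Type*} [TopologicalSpace X]
    [FirstCountableTopology X] [MeasurableSpace α] {μ : Measure α} {φ : X → α → ℝ} {g : α → ℝ}
    {C : ℝ} (hg : Integrable g μ)
    (hφm : ∀ ε, AEStronglyMeasurable (φ ε) μ) (hφc : ∀ᵐ x ∂μ, Continuous (φ · x))
    (hφC : ∀ ε, ∀ᵐ x ∂μ, ‖φ ε x‖ ≤ C) :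
    Continuous fun ε ↦ ∫ x, φ ε x * g x ∂μ := by
  refine continuous_of_dominated (fun ε ↦ (hφm ε).mul hg.aestronglyMeasurable)
    (fun ε ↦ ?_) (hg.norm.const_mul C) (hφc.mono fun x hx ↦ hx.mul continuous_const)
  filter_upwards [hφC ε] with x hx
  rw [norm_mul]
  exact mul_le_mul_of_nonneg_right hx (norm_nonneg _)

theorem inv_eq_integral_exp_neg_mul_div_two {c : ℝ} (hc : 0 < c) :
    c⁻¹ = (∫ s in Ioi 0, rexp (-(s * c / 2))) / 2 := by
  have := integral_exp_mul_Ioi (a := -(c / 2)) (by linarith) 0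
  simp only [mul_zero, Real.exp_zero] at this
  rw [show (fun s ↦ rexp (-(s * c / 2))) = fun s ↦ rexp (-(c / 2) * s) by ext; ring_nf, this]
  field_simp

theorem integrableOn_exp_neg_mul_div_two {c : ℝ} (hc : 0 < c) :
    IntegrableOn (fun s ↦ rexp (-(s * c / 2))) (Ioi 0) := by
  convert integrableOn_exp_mul_Ioi (a := -(c / 2)) (by linarith) 0 using 3
  ring

theorem abs_le_norm_ofReal_sub_I_mul (ω ε : ℝ) : |ω| ≤ ‖(ω : ℂ) - I * ε‖ := by
  simpa using abs_re_le_norm ((ω : ℂ) - I * ε)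

theorem ofReal_sub_I_mul_ne_zero {ε : ℝ} (hε : ε ≠ 0) (ω : ℝ) : (ω : ℂ) - I * ε ≠ 0 := by
  intro h
  simpa [hε] using congrArg im h

theorem ofReal_mul_ofReal_sub_I_mul_ne_zero {ω : ℝ} (hω : ω ≠ 0) (ε : ℝ) :
    (ω : ℂ) * (ω - I * ε) ≠ 0 := by
  refine mul_ne_zero (ofReal_ne_zero.2 hω) fun h ↦ hω ?_
  simpa using congrArg re h

theorem norm_cexp_neg_I_mul_sq (ω : ℝ) : ‖cexp (-(I * ω ^ 2 / 2))‖ = 1 := by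
  rw [show -(I * ω ^ 2 / 2) = ((-(ω ^ 2 / 2) : ℝ) : ℂ) * I by push_cast; ring]
  exact norm_exp_ofReal_mul_I _

theorem hasDerivAt_cexp_neg_I_mul_sq (ω : ℝ) :
    HasDerivAt (fun x : ℝ ↦ cexp (-(I * x ^ 2 / 2))) (-I * ω * cexp (-(I * ω ^ 2 / 2))) ω := by
  have := (hasDerivAt_pow 2 (ω : ℂ)).const_mul (-(I / 2)) |>.cexp |>.comp_ofReal
  convert this using 1
  · ext x; ring_nf
  · push_cast; ring_nf

theorem hasDerivAt_I_div_ofReal_mul_ofReal_sub_I_mul (ε : ℝ) {ω : ℝ} (hω : ω ≠ 0) :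
    HasDerivAt (fun x : ℝ ↦ I / (x * (x - I * ε)))
      (-(I * (2 * ω - I * ε)) / (ω * (ω - I * ε)) ^ 2) ω := by
  have hd : HasDerivAt (fun x : ℂ ↦ x * (x - I * ε)) (2 * ω - I * ε) ω :=
    ((hasDerivAt_id' (ω : ℂ)).fun_mul ((hasDerivAt_id' (ω : ℂ)).sub_const (I * ε))).congr_deriv
      (by ring)
  convert ((hd.inv (ofReal_mul_ofReal_sub_I_mul_ne_zero hω ε)).const_mul I).comp_ofReal using 1
  · ext x; simp [div_eq_mul_inv]
  · ring

theorem norm_deriv_I_div_ofReal_mul_ofReal_sub_I_mul_le (ε : ℝ) {ω : ℝ} (hω : 0 < ω) :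
    ‖-(I * (2 * ω - I * ε)) / ((ω : ℂ) * (ω - I * ε)) ^ 2‖ ≤ 2 / ω ^ 3 := by
  have hd := abs_le_norm_ofReal_sub_I_mul ω ε
  rw [abs_of_pos hω] at hd
  have hnum : ‖2 * (ω : ℂ) - I * ε‖ ≤ 2 * ‖(ω : ℂ) - I * ε‖ := by
    calc ‖2 * (ω : ℂ) - I * ε‖ = ‖(ω : ℂ) + ((ω : ℂ) - I * ε)‖ := by ring_nf
      _ ≤ ω + ‖(ω : ℂ) - I * ε‖ := by
        grw [norm_add_le]; simp [abs_of_pos hω]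
      _ ≤ _ := by linarith
  rw [norm_div, norm_neg, norm_mul, norm_I, one_mul, norm_pow, norm_mul, norm_real,
    Real.norm_of_nonneg hω.le,
    div_le_div_iff₀ (by have := hω.trans_le hd; positivity) (by positivity)]
  calc ‖2 * (ω : ℂ) - I * ε‖ * ω ^ 3 ≤ 2 * ‖(ω : ℂ) - I * ε‖ * (ω ^ 2 * ω) := by
        rw [← pow_succ]; gcongr
    _ ≤ 2 * ‖(ω : ℂ) - I * ε‖ * (ω ^ 2 * ‖(ω : ℂ) - I * ε‖) := by gcongr
    _ = _ := by ring

theorem norm_I_div_ofReal_mul_ofReal_sub_I_mul_le (ε : ℝ) {ω : ℝ} (hω : 1 ≤ ω) :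
    ‖I / ((ω : ℂ) * (ω - I * ε))‖ ≤ ω⁻¹ := by
  have hd := abs_le_norm_ofReal_sub_I_mul ω ε
  rw [abs_of_pos (by linarith)] at hd
  rw [norm_div, norm_I, norm_mul, norm_real, Real.norm_of_nonneg (by linarith), one_div]
  gcongr
  nlinarith

noncomputable def fresnelKernel (ε ω : ℝ) : ℂ := cexp (-(I * ω ^ 2 / 2)) / (ω - I * ε)

theorem continuous_fresnelKernel {ε : ℝ} (hε : ε ≠ 0) : Continuous (fresnelKernel ε) :=
  Continuous.div (by fun_prop) (by fun_prop) (ofReal_sub_I_mul_ne_zero hε)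

theorem fresnelKernel_eq_I_div_mul {ε ω : ℝ} (hω : ω ≠ 0) :
    fresnelKernel ε ω = I / (ω * (ω - I * ε)) * (-I * ω * cexp (-(I * ω ^ 2 / 2))) := by
  have hω' : (ω : ℂ) ≠ 0 := ofReal_ne_zero.2 hω
  have hd := right_ne_zero_of_mul (ofReal_mul_ofReal_sub_I_mul_ne_zero hω ε)
  rw [fresnelKernel]
  field_simp
  ring_nf
  rw [I_sq]
  ring

theorem exists_tendsto_integral_one_fresnelKernel (ε : ℝ) :
    ∃ L, Tendsto (fun A ↦ ∫ ω in (1 : ℝ)..A, fresnelKernel ε ω) atTop (𝓝 L) := by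
  set u' : ℝ → ℂ := fun x ↦ -(I * (2 * x - I * ε)) / (x * (x - I * ε)) ^ 2
  have hpos : ∀ x ∈ Ici (1 : ℝ), 0 < x := fun x hx ↦ zero_lt_one.trans_le hx
  have hu' : ContinuousOn u' (Ici 1) := by
    refine ContinuousOn.div (by fun_prop) (by fun_prop) fun x hx ↦ ?_
    exact pow_ne_zero _ (ofReal_mul_ofReal_sub_I_mul_ne_zero (hpos x hx).ne' ε)
  have hu'v : IntegrableOn (fun x ↦ u' x * cexp (-(I * x ^ 2 / 2))) (Ioi 1) := by
    refine Integrable.mono' ((integrableOn_Ioi_rpow_of_lt (by norm_num : (-3 : ℝ) < -1)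
      one_pos).const_mul 2) (((hu'.mono Ioi_subset_Ici_self).fun_mul
        (by fun_prop)).aestronglyMeasurable measurableSet_Ioi) ?_
    refine (ae_restrict_iff' measurableSet_Ioi).2 (Eventually.of_forall fun x hx ↦ ?_)
    have hx : (0 : ℝ) < x := zero_lt_one.trans hx
    rw [norm_mul, norm_cexp_neg_I_mul_sq, mul_one, rpow_neg hx.le, rpow_ofNat]
    exact norm_deriv_I_div_ofReal_mul_ofReal_sub_I_mul_le ε hx
  have huv : Tendsto (fun x : ℝ ↦ I / (x * (x - I * ε)) * cexp (-(I * x ^ 2 / 2))) atTop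
      (𝓝 0) := by
    refine squeeze_zero_norm' ?_ tendsto_inv_atTop_zero
    filter_upwards [eventually_ge_atTop 1] with x hx
    rw [norm_mul, norm_cexp_neg_I_mul_sq, mul_one]
    exact norm_I_div_ofReal_mul_ofReal_sub_I_mul_le ε hx
  refine ⟨_, (tendsto_integral_mul_deriv_atTop
    (fun x hx ↦ hasDerivAt_I_div_ofReal_mul_ofReal_sub_I_mul ε (hpos x hx).ne')
    (fun x _ ↦ hasDerivAt_cexp_neg_I_mul_sq x) hu' (by fun_prop) hu'v huv).congr' ?_⟩
  filter_upwards [eventually_ge_atTop 1] with A hA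
  refine intervalIntegral.integral_congr fun x hx ↦ (fresnelKernel_eq_I_div_mul ?_).symm
  rw [uIcc_of_le hA] at hx
  exact (hpos x hx.1).ne'

noncomputable def fresnelPlus (ε : ℝ) : ℂ :=
  limUnder atTop fun A ↦ ∫ ω in (0 : ℝ)..A, fresnelKernel ε ω

theorem tendsto_integral_fresnelKernel {ε : ℝ} (hε : ε ≠ 0) :
    Tendsto (fun A ↦ ∫ ω in (0 : ℝ)..A, fresnelKernel ε ω) atTop (𝓝 (fresnelPlus ε)) := by
  obtain ⟨L, hL⟩ := exists_tendsto_integral_one_fresnelKernel ε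
  have hint : ∀ a b, IntervalIntegrable (fresnelKernel ε) volume a b :=
    (continuous_fresnelKernel hε).intervalIntegrable
  refine tendsto_nhds_limUnder ⟨_, (hL.const_add (∫ ω in (0 : ℝ)..1, fresnelKernel ε ω)).congr
    fun A ↦ ?_⟩
  exact intervalIntegral.integral_add_adjacent_intervals (hint 0 1) (hint 1 A)

theorem cexp_I_mul_sq_div_neg (ε ω : ℝ) :
    cexp (I * ((-ω : ℝ) : ℂ) ^ 2 / 2) / (((-ω : ℝ) : ℂ) - I * ε) = -conj (fresnelKernel ε ω) := by
  rw [fresnelKernel, map_div₀, ← exp_conj, ← div_neg]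
  congr 1 <;> simp [map_ofNat] <;> ring_nf

theorem tendsto_integral_neg_fresnelKernel {ε : ℝ} (hε : ε ≠ 0) :
    Tendsto (fun A ↦ ∫ ω in -A..(0 : ℝ), cexp (I * (ω : ℂ) ^ 2 / 2) / ((ω : ℂ) - I * ε)) atTop
      (𝓝 (-conj (fresnelPlus ε))) := by
  refine ((continuous_conj.neg.tendsto _).comp (tendsto_integral_fresnelKernel hε)).congr
    fun A ↦ ?_
  set g : ℝ → ℂ := fun ω ↦ cexp (I * (ω : ℂ) ^ 2 / 2) / ((ω : ℂ) - I * ε)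
  calc -conj (∫ ω in (0 : ℝ)..A, fresnelKernel ε ω) = ∫ ω in (0 : ℝ)..A, g (-ω) := by
        simp only [g, cexp_I_mul_sq_div_neg, intervalIntegral.integral_neg,
          intervalIntegral.intervalIntegral_conj]
    _ = ∫ ω in -A..0, g ω := by simp [intervalIntegral.integral_comp_neg g]

theorem im_fresnelKernel (ε ω : ℝ) :
    (fresnelKernel ε ω).im =
      ε * Real.cos (ω ^ 2 / 2) / (ω ^ 2 + ε ^ 2) - ω * Real.sin (ω ^ 2 / 2) / (ω ^ 2 + ε ^ 2) := by
  rw [fresnelKernel, show -(I * (ω : ℂ) ^ 2 / 2) = ((-(ω ^ 2 / 2) : ℝ) : ℂ) * I by push_cast; ring,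
    div_im, exp_ofReal_mul_I_re, exp_ofReal_mul_I_im, Real.cos_neg, Real.sin_neg]
  simp only [normSq_apply, sub_re, sub_im, ofReal_re, ofReal_im, mul_re, mul_im, I_re, I_im]
  ring_nf

theorem tendsto_integral_cos_sq_div_sq_add_sq {ε : ℝ} (hε : 0 < ε) :
    Tendsto (fun A ↦ ∫ ω in (0 : ℝ)..A, ε * Real.cos (ω ^ 2 / 2) / (ω ^ 2 + ε ^ 2)) atTop
      (𝓝 (∫ x in Ioi 0, Real.cos (ε ^ 2 * x ^ 2 / 2) * (1 + x ^ 2)⁻¹)) := by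
  set g : ℝ → ℝ := fun ω ↦ ε * Real.cos (ω ^ 2 / 2) / (ω ^ 2 + ε ^ 2)
  have hint : IntegrableOn (fun x ↦ Real.cos (ε ^ 2 * x ^ 2 / 2) * (1 + x ^ 2)⁻¹) (Ioi 0) :=
    integrable_inv_one_add_sq.integrableOn.bdd_mul (c := 1) (by fun_prop)
      (Eventually.of_forall fun x ↦ by simpa using abs_cos_le_one _)
  refine (intervalIntegral_tendsto_integral_Ioi 0 hint (tendsto_id.atTop_div_const hε)).congr
    fun A ↦ ?_
  calc ∫ x in (0 : ℝ)..A / ε, Real.cos (ε ^ 2 * x ^ 2 / 2) * (1 + x ^ 2)⁻¹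
      = ε * ∫ x in (0 : ℝ)..A / ε, g (ε * x) := by
        rw [← intervalIntegral.integral_const_mul]
        refine intervalIntegral.integral_congr fun x _ ↦ ?_
        simp only [g]
        field_simp
        ring_nf
    _ = ∫ ω in (0 : ℝ)..A, g ω := by
        rw [intervalIntegral.mul_integral_comp_mul_left, mul_zero, mul_div_cancel₀ _ hε.ne']

theorem integral_mul_sin_mul_exp (s A : ℝ) :
    ∫ ω in (0 : ℝ)..A, ω * Real.sin (ω ^ 2 / 2) * rexp (-(s * ω ^ 2 / 2)) =
      ((cexp ((I - s) / 2 * A ^ 2) - 1) / (I - s)).im := by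
  have hc : (I - s) / 2 ≠ 0 := by
    intro h; simpa using congrArg im h
  have him : ∀ ω : ℝ, ω * Real.sin (ω ^ 2 / 2) * rexp (-(s * ω ^ 2 / 2)) =
      ((ω : ℂ) * cexp ((I - s) / 2 * ω ^ 2)).im := by
    intro ω
    rw [show (I - s) / 2 * (ω : ℂ) ^ 2 = ((-(s * ω ^ 2 / 2) : ℝ) : ℂ) + ((ω ^ 2 / 2 : ℝ) : ℂ) * I by
      push_cast; ring, Complex.exp_add, exp_ofReal_mul_I]
    rw [← ofReal_exp]
    simp only [mul_im, ofReal_re, ofReal_im, add_re, add_im, mul_re, I_re, I_im]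
    ring
  have hcomm := intervalIntegral.intervalIntegral_im
    (Continuous.intervalIntegrable (μ := volume) (by fun_prop :
      Continuous fun ω : ℝ ↦ (ω : ℂ) * cexp ((I - s) / 2 * ω ^ 2)) 0 A)
  simp only [RCLike.im_to_complex] at hcomm
  simp_rw [him, hcomm, integral_mul_cexp_mul_sq hc]
  rw [ofReal_zero, zero_pow two_ne_zero, mul_zero, Complex.exp_zero,
    mul_div_cancel₀ _ two_ne_zero]

theorem norm_cexp_sub_one_div_le {s : ℝ} (hs : 0 ≤ s) (A : ℝ) :
    ‖(cexp ((I - s) / 2 * A ^ 2) - 1) / (I - s)‖ ≤ 2 := by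
  have hden : 1 ≤ ‖I - (s : ℂ)‖ := by simpa using abs_im_le_norm (I - (s : ℂ))
  have hexp : ‖cexp ((I - s) / 2 * A ^ 2)‖ ≤ 1 := by
    rw [norm_exp, exp_le_one_iff]
    have : ((I - s) / 2 * (A : ℂ) ^ 2).re = -(s * A ^ 2 / 2) := by
      simp [← ofReal_pow]; ring
    rw [this]; have := sq_nonneg A; nlinarith
  rw [norm_div, div_le_iff₀ (by linarith)]
  calc _ ≤ ‖cexp ((I - s) / 2 * A ^ 2)‖ + ‖(1 : ℂ)‖ := norm_sub_le _ _
    _ ≤ 2 := by rw [norm_one]; linarith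
    _ ≤ 2 * ‖I - (s : ℂ)‖ := by linarith

theorem tendsto_im_cexp_sub_one_div {s : ℝ} (hs : 0 < s) :
    Tendsto (fun A : ℝ ↦ ((cexp ((I - s) / 2 * A ^ 2) - 1) / (I - s)).im) atTop
      (𝓝 (1 + s ^ 2)⁻¹) := by
  have hexp : Tendsto (fun A : ℝ ↦ cexp ((I - s) / 2 * A ^ 2)) atTop (𝓝 0) := by
    rw [tendsto_exp_nhds_zero_iff]
    have : Tendsto (fun A : ℝ ↦ A ^ 2 * (-(s / 2))) atTop atBot :=
      (tendsto_pow_atTop two_ne_zero).atTop_mul_const_of_neg (by linarith)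
    refine this.congr fun A ↦ ?_
    simp [← ofReal_pow]; ring
  have hval : ((0 - 1) / (I - s)).im = (1 + s ^ 2)⁻¹ := by
    rw [div_im]; simp [normSq_apply]; ring
  rw [← hval]
  exact (continuous_im.tendsto _).comp ((hexp.sub_const 1).div_const _)

theorem integral_mul_sin_div_sq_add_sq {ε : ℝ} (hε : ε ≠ 0) {A : ℝ} (hA : 0 ≤ A) :
    ∫ ω in (0 : ℝ)..A, ω * Real.sin (ω ^ 2 / 2) / (ω ^ 2 + ε ^ 2) =
      (∫ s in Ioi 0, rexp (-(s * ε ^ 2 / 2)) *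
        ((cexp ((I - s) / 2 * A ^ 2) - 1) / (I - s)).im) / 2 := by
  set F : ℝ → ℝ → ℝ := fun ω s ↦ ω * Real.sin (ω ^ 2 / 2) * rexp (-(s * (ω ^ 2 + ε ^ 2) / 2))
  have hrep : ∀ ω, ω * Real.sin (ω ^ 2 / 2) / (ω ^ 2 + ε ^ 2) = (∫ s in Ioi 0, F ω s) / 2 := by
    intro ω
    rw [div_eq_mul_inv, inv_eq_integral_exp_neg_mul_div_two (by positivity), ← mul_div_assoc,
      ← integral_const_mul]
  have hinner : ∀ s, ∫ ω in Ioc 0 A, F ω s =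
      rexp (-(s * ε ^ 2 / 2)) * ((cexp ((I - s) / 2 * A ^ 2) - 1) / (I - s)).im := by
    intro s
    rw [← integral_mul_sin_mul_exp, ← intervalIntegral.integral_of_le hA,
      ← intervalIntegral.integral_const_mul]
    refine intervalIntegral.integral_congr fun ω _ ↦ ?_
    simp only [F, mul_add, add_div, neg_add, Real.exp_add]
    ring
  have hint : Integrable (Function.uncurry F)
      ((volume.restrict (Ioc 0 A)).prod (volume.restrict (Ioi 0))) := by
    refine Integrable.mono' ((integrableOn_const (C := A) measure_Ioc_lt_top.ne).mul_prod
      (integrableOn_exp_neg_mul_div_two (pow_pos (abs_pos.2 hε) 2 |>.trans_eq (sq_abs ε))))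
      (by fun_prop) ?_
    rw [Measure.prod_restrict, ae_restrict_iff' (measurableSet_Ioc.prod measurableSet_Ioi)]
    refine Eventually.of_forall fun ⟨ω, s⟩ ⟨hω, hs⟩ ↦ ?_
    simp only [mem_Ioc, mem_Ioi] at hω hs
    simp only [F, Function.uncurry, Real.norm_eq_abs, abs_mul, abs_of_pos (Real.exp_pos _),
      abs_of_pos hω.1]
    have hsin : ω * |Real.sin (ω ^ 2 / 2)| ≤ A := by
      nlinarith [abs_sin_le_one (ω ^ 2 / 2), abs_nonneg (Real.sin (ω ^ 2 / 2)), hω.2]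
    have hexp : rexp (-(s * (ω ^ 2 + ε ^ 2) / 2)) ≤ rexp (-(s * ε ^ 2 / 2)) := by
      gcongr
      nlinarith [mul_nonneg hs.le (sq_nonneg ω)]
    exact mul_le_mul hsin hexp (Real.exp_pos _).le hA
  simp_rw [intervalIntegral.integral_of_le hA, hrep, integral_div, ← hinner]
  rw [integral_integral_swap hint]

theorem tendsto_integral_mul_sin_div_sq_add_sq {ε : ℝ} (hε : ε ≠ 0) :
    Tendsto (fun A ↦ ∫ ω in (0 : ℝ)..A, ω * Real.sin (ω ^ 2 / 2) / (ω ^ 2 + ε ^ 2)) atTop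
      (𝓝 ((∫ s in Ioi 0, rexp (-(s * ε ^ 2 / 2)) * (1 + s ^ 2)⁻¹) / 2)) := by
  have hε2 : 0 < ε ^ 2 := by positivity
  have hI : ∀ s : ℝ, I - s ≠ 0 := fun s h ↦ by simpa using congrArg im h
  have hlim : Tendsto (fun A : ℝ ↦ ∫ s in Ioi 0, rexp (-(s * ε ^ 2 / 2)) *
      ((cexp ((I - s) / 2 * A ^ 2) - 1) / (I - s)).im) atTop
      (𝓝 (∫ s in Ioi 0, rexp (-(s * ε ^ 2 / 2)) * (1 + s ^ 2)⁻¹)) := by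
    refine tendsto_integral_filter_of_dominated_convergence (fun s ↦ 2 * rexp (-(s * ε ^ 2 / 2)))
      (Eventually.of_forall fun A ↦ ?_) (Eventually.of_forall fun A ↦ ?_)
      ((integrableOn_exp_neg_mul_div_two hε2).const_mul 2) ?_
    · exact (Continuous.mul (by fun_prop) (continuous_im.comp
        (Continuous.div (by fun_prop) (by fun_prop) hI))).aestronglyMeasurable
    · refine (ae_restrict_iff' measurableSet_Ioi).2 (Eventually.of_forall fun s hs ↦ ?_)
      rw [Real.norm_eq_abs, abs_mul, abs_of_pos (Real.exp_pos _), mul_comm]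
      gcongr
      exact (abs_im_le_norm _).trans (norm_cexp_sub_one_div_le (le_of_lt hs) A)
    · exact (ae_restrict_iff' measurableSet_Ioi).2 (Eventually.of_forall fun s hs ↦
        (tendsto_im_cexp_sub_one_div hs).const_mul _)
  refine (hlim.div_const 2).congr' ?_
  filter_upwards [eventually_ge_atTop 0] with A hA
  exact (integral_mul_sin_div_sq_add_sq hε hA).symm

theorem im_fresnelPlus {ε : ℝ} (hε : 0 < ε) :
    (fresnelPlus ε).im = (∫ x in Ioi 0, Real.cos (ε ^ 2 * x ^ 2 / 2) * (1 + x ^ 2)⁻¹) -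
      (∫ s in Ioi 0, rexp (-(s * ε ^ 2 / 2)) * (1 + s ^ 2)⁻¹) / 2 := by
  refine tendsto_nhds_unique ((continuous_im.tendsto _).comp
    (tendsto_integral_fresnelKernel hε.ne')) (((tendsto_integral_cos_sq_div_sq_add_sq hε).sub
      (tendsto_integral_mul_sin_div_sq_add_sq hε.ne')).congr fun A ↦ ?_)
  have hint := (continuous_fresnelKernel hε.ne').intervalIntegrable (μ := volume) 0 A
  have hcomm := intervalIntegral.intervalIntegral_im hint
  simp only [RCLike.im_to_complex] at hcomm
  rw [Function.comp_apply, ← hcomm, ← intervalIntegral.integral_sub]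
  · simp only [im_fresnelKernel]
  all_goals exact (Continuous.div (by fun_prop) (by fun_prop) fun x ↦ by positivity)
    |>.intervalIntegrable _ _

theorem tendsto_im_fresnelPlus :
    Tendsto (fun ε ↦ (fresnelPlus ε).im) (𝓝[>] 0) (𝓝 (π / 4)) := by
  have hcos : Continuous fun ε : ℝ ↦ ∫ x in Ioi 0, Real.cos (ε ^ 2 * x ^ 2 / 2) * (1 + x ^ 2)⁻¹ :=
    continuous_integral_mul_of_norm_le (C := 1) integrable_inv_one_add_sq.integrableOn
      (fun _ ↦ by fun_prop) (Eventually.of_forall fun _ ↦ by fun_prop)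
      (fun _ ↦ Eventually.of_forall fun _ ↦ by simpa using abs_cos_le_one _)
  have hexp : Continuous fun ε : ℝ ↦ ∫ s in Ioi 0, rexp (-(s * ε ^ 2 / 2)) * (1 + s ^ 2)⁻¹ :=
    continuous_integral_mul_of_norm_le (C := 1) integrable_inv_one_add_sq.integrableOn
      (fun _ ↦ by fun_prop) (Eventually.of_forall fun _ ↦ by fun_prop)
      (fun ε ↦ (ae_restrict_iff' measurableSet_Ioi).2 (Eventually.of_forall fun s hs ↦ by
        rw [Real.norm_of_nonneg (Real.exp_pos _).le, Real.exp_le_one_iff, neg_nonpos]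
        have := mem_Ioi.1 hs
        positivity))
  have h := ((hcos.sub (hexp.div_const 2)).tendsto 0).mono_left (nhdsWithin_le_nhds (s := Ioi 0))
  simp only [Pi.sub_apply, zero_pow two_ne_zero, zero_mul, mul_zero, zero_div, neg_zero,
    Real.cos_zero, Real.exp_zero, one_mul, integral_Ioi_inv_one_add_sq, arctan_zero, sub_zero] at h
  rw [show π / 2 - π / 2 / 2 = π / 4 by ring] at h
  refine h.congr' ?_
  filter_upwards [self_mem_nhdsWithin] with ε hε
  exact (im_fresnelPlus hε).symm

/-- For every `ε > 0` the improper integrals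
`K₋(ε) = ∫_{−∞}^0 e^{iω²/2}/(ω − iε) dω` and `K₊(ε) = ∫_0^∞ e^{−iω²/2}/(ω − iε) dω`
exist as limits of integrals over bounded intervals, and
`K₋(ε) + K₊(ε) → iπ/2` as `ε → 0⁺`. -/
theorem fresnel_sum_half :
    ∃ Km Kp : ℝ → ℂ,
      (∀ ε : ℝ, 0 < ε →
        Tendsto
          (fun A : ℝ => ∫ ω in (-A)..(0:ℝ),
            Complex.exp (Complex.I * (ω : ℂ) ^ 2 / 2) / ((ω : ℂ) - Complex.I * ε))
          atTop (nhds (Km ε))) ∧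
      (∀ ε : ℝ, 0 < ε →
        Tendsto
          (fun A : ℝ => ∫ ω in (0:ℝ)..A,
            Complex.exp (-(Complex.I * (ω : ℂ) ^ 2 / 2)) / ((ω : ℂ) - Complex.I * ε))
          atTop (nhds (Kp ε))) ∧
      Tendsto (fun ε : ℝ => Km ε + Kp ε) (nhdsWithin 0 (Set.Ioi 0))
        (nhds (Complex.I * Real.pi / 2)) := by
  refine ⟨fun ε ↦ -conj (fresnelPlus ε), fresnelPlus,
    fun ε hε ↦ tendsto_integral_neg_fresnelKernel hε.ne',
    fun ε hε ↦ tendsto_integral_fresnelKernel hε.ne', ?_⟩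
  have h := ((continuous_ofReal.tendsto _).comp (tendsto_im_fresnelPlus.const_mul 2)).mul_const I
  rw [show ((2 * (π / 4) : ℝ) : ℂ) * I = I * π / 2 by push_cast; ring] at h
  refine h.congr fun ε ↦ ?_
  rw [Function.comp_apply, neg_add_eq_sub, sub_conj]
end

section
/- The improper integral ∫₀^∞ (cos u / u)·(∫₀^u sin²(v)/v dv) du converges; that is, the limit as T → ∞ of ∫₀^T (cos u / u)·(∫₀^u sin²(v)/v dv) du exists and is finite. -/
/-!
Write `F u = ∫₀^u sin² v / v dv`. Since `sin² v / v ≤ min 1 (1 / v) ≤ v ^ (-1/2)`, we get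
`|F u| ≤ |u|` and `0 ≤ F u ≤ 2 √u`. The first bound makes the integrand `cos u / u * F u`
bounded by `1`, so only the tail matters. On `[1, ∞)` this is a Dirichlet test: integrating
`cos` by parts against `F u / u`, the boundary term tends to `0` and the derivative
`(sin² u - F u) / u²` of `F u / u` is `O(u ^ (-3/2))`, hence integrable.
-/

open Real Filter MeasureTheory Set Topology

theorem exists_tendsto_intervalIntegral_mul_of_integrableOn_deriv
    {f F g g' : ℝ → ℝ} {a C : ℝ}
    (hF : ∀ x ∈ Ici a, HasDerivAt F (f x) x) (hf : ContinuousOn f (Ici a))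
    (hFC : ∀ x ∈ Ici a, |F x| ≤ C)
    (hg : ∀ x ∈ Ici a, HasDerivAt g (g' x) x) (hg' : IntegrableOn g' (Ioi a))
    (hg0 : Tendsto g atTop (𝓝 0)) :
    ∃ L, Tendsto (fun T => ∫ x in a..T, g x * f x) atTop (𝓝 L) := by
  have hg'F : IntegrableOn (fun x => g' x * F x) (Ioi a) := by
    refine hg'.mul_bdd (c := C) ?_ ?_
    · exact (HasDerivAt.continuousOn fun x hx => hF x (mem_Ici_of_Ioi hx)).aestronglyMeasurable
        measurableSet_Ioi
    · exact ae_restrict_of_forall_mem measurableSet_Ioi fun x hx => hFC x (mem_Ici_of_Ioi hx)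
  have hboundary : Tendsto (fun T => g T * F T) atTop (𝓝 0) :=
    hg0.zero_mul_isBoundedUnder_le <| isBoundedUnder_of_eventually_le (a := C) <|
      eventually_ge_atTop a |>.mono fun x hx => hFC x hx
  have htail := intervalIntegral_tendsto_integral_Ioi a hg'F tendsto_id
  refine ⟨0 - g a * F a - ∫ x in Ioi a, g' x * F x,
    ((hboundary.sub_const _).sub htail).congr' ?_⟩
  filter_upwards [eventually_ge_atTop a] with T hT
  have hsub : uIcc a T ⊆ Ici a := by rw [uIcc_of_le hT]; exact Icc_subset_Ici_self
  exact (intervalIntegral.integral_mul_deriv_eq_deriv_mul (fun x hx => hg x (hsub hx))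
    (fun x hx => hF x (hsub hx))
    ((intervalIntegrable_iff_integrableOn_Ioc_of_le hT).2 (hg'.mono_set Ioc_subset_Ioi_self))
    ((hf.mono hsub).intervalIntegrable)).symm

theorem norm_sin_sq_div_le_one (v : ℝ) : ‖sin v ^ 2 / v‖ ≤ 1 := by
  rw [Real.norm_eq_abs, abs_div, abs_of_nonneg (sq_nonneg _)]
  refine div_le_one_of_le₀ ?_ (abs_nonneg v)
  calc sin v ^ 2 ≤ |sin v| := by
        rw [← sq_abs]; exact pow_le_of_le_one (abs_nonneg _) (abs_sin_le_one v) two_ne_zero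
    _ ≤ |v| := abs_sin_le_abs

theorem sin_sq_div_le_rpow {v : ℝ} (hv : 0 < v) : sin v ^ 2 / v ≤ v ^ (-(1 / 2) : ℝ) := by
  have h_nonneg : 0 ≤ sin v ^ 2 / v := by positivity
  have h_le_one : sin v ^ 2 / v ≤ 1 := (le_norm_self _).trans (norm_sin_sq_div_le_one v)
  -- `x ≤ 1` and `x ≤ 1 / v` give `x² ≤ 1 / v`.
  have h_le_inv : sin v ^ 2 / v ≤ v⁻¹ := by
    rw [div_eq_mul_inv]; exact mul_le_of_le_one_left (by positivity) (sin_sq_le_one v)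
  rw [rpow_neg hv.le, ← sqrt_eq_rpow, ← sqrt_inv, le_sqrt h_nonneg (by positivity)]
  nlinarith

theorem intervalIntegrable_sin_sq_div (a b : ℝ) :
    IntervalIntegrable (fun v => sin v ^ 2 / v) volume a b :=
  (intervalIntegrable_const (c := (1 : ℝ))).mono_fun
    (by fun_prop : Measurable fun v : ℝ => sin v ^ 2 / v).aestronglyMeasurable
    (Eventually.of_forall fun v => by simpa using norm_sin_sq_div_le_one v)

noncomputable def sinSqDivIntegral (u : ℝ) : ℝ := ∫ v in (0 : ℝ)..u, sin v ^ 2 / v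

theorem continuous_sinSqDivIntegral : Continuous sinSqDivIntegral :=
  intervalIntegral.continuous_primitive intervalIntegrable_sin_sq_div 0

theorem hasDerivAt_sinSqDivIntegral {u : ℝ} (hu : u ≠ 0) :
    HasDerivAt sinSqDivIntegral (sin u ^ 2 / u) u := by
  have hmeas : Measurable fun v : ℝ => sin v ^ 2 / v := by fun_prop
  exact intervalIntegral.integral_hasDerivAt_right (intervalIntegrable_sin_sq_div 0 u)
    hmeas.stronglyMeasurable.stronglyMeasurableAtFilter (by fun_prop (disch := exact hu))

theorem abs_sinSqDivIntegral_le (u : ℝ) : |sinSqDivIntegral u| ≤ |u| := by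
  simpa [sinSqDivIntegral] using intervalIntegral.norm_integral_le_of_norm_le_const
    (a := 0) (b := u) fun v _ => norm_sin_sq_div_le_one v

theorem sinSqDivIntegral_nonneg {u : ℝ} (hu : 0 ≤ u) : 0 ≤ sinSqDivIntegral u :=
  intervalIntegral.integral_nonneg hu fun _ hv => div_nonneg (sq_nonneg _) hv.1

theorem sinSqDivIntegral_le_rpow {u : ℝ} (hu : 0 ≤ u) :
    sinSqDivIntegral u ≤ 2 * u ^ (1 / 2 : ℝ) := by
  calc sinSqDivIntegral u ≤ ∫ v in (0 : ℝ)..u, v ^ (-(1 / 2) : ℝ) :=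
        intervalIntegral.integral_mono_on_of_le_Ioo hu (intervalIntegrable_sin_sq_div 0 u)
          (intervalIntegral.intervalIntegrable_rpow' (by norm_num))
          fun v hv => sin_sq_div_le_rpow hv.1
    _ = 2 * u ^ (1 / 2 : ℝ) := by
        rw [integral_rpow (by norm_num)]; norm_num; ring

theorem hasDerivAt_sinSqDivIntegral_div {u : ℝ} (hu : u ≠ 0) :
    HasDerivAt (fun u => sinSqDivIntegral u / u) ((sin u ^ 2 - sinSqDivIntegral u) / u ^ 2) u :=
  ((hasDerivAt_sinSqDivIntegral hu).div (hasDerivAt_id' u) hu).congr_deriv (by field_simp)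

theorem abs_deriv_sinSqDivIntegral_div_le {u : ℝ} (hu : 1 ≤ u) :
    |(sin u ^ 2 - sinSqDivIntegral u) / u ^ 2| ≤ 3 * u ^ (-(3 / 2) : ℝ) := by
  have hu0 : 0 < u := one_pos.trans_le hu
  have hsqrt : 1 ≤ u ^ (1 / 2 : ℝ) := one_le_rpow hu (by norm_num)
  have hnum : |sin u ^ 2 - sinSqDivIntegral u| ≤ 3 * u ^ (1 / 2 : ℝ) := by
    have := sin_sq_le_one u
    have := sinSqDivIntegral_le_rpow hu0.le
    have := sinSqDivIntegral_nonneg hu0.le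
    rw [abs_le]; constructor <;> nlinarith [sq_nonneg (sin u)]
  calc |(sin u ^ 2 - sinSqDivIntegral u) / u ^ 2|
      ≤ 3 * u ^ (1 / 2 : ℝ) / u ^ 2 := by
        rw [abs_div, abs_of_pos (by positivity : (0 : ℝ) < u ^ 2)]; gcongr
    _ = 3 * u ^ (-(3 / 2) : ℝ) := by
        rw [mul_div_assoc, ← rpow_natCast, ← rpow_sub hu0]; norm_num

theorem integrableOn_deriv_sinSqDivIntegral_div :
    IntegrableOn (fun u => (sin u ^ 2 - sinSqDivIntegral u) / u ^ 2) (Ioi 1) := by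
  have hdom : IntegrableOn (fun u : ℝ => 3 * u ^ (-(3 / 2) : ℝ)) (Ioi 1) :=
    (integrableOn_Ioi_rpow_of_lt (by norm_num) one_pos).const_mul 3
  refine Integrable.mono' hdom
    (by have := continuous_sinSqDivIntegral.measurable; fun_prop : Measurable fun u : ℝ =>
      (sin u ^ 2 - sinSqDivIntegral u) / u ^ 2).aestronglyMeasurable ?_
  exact ae_restrict_of_forall_mem measurableSet_Ioi fun u hu =>
    abs_deriv_sinSqDivIntegral_div_le (le_of_lt hu)

theorem tendsto_sinSqDivIntegral_div_atTop :
    Tendsto (fun u => sinSqDivIntegral u / u) atTop (𝓝 0) := by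
  have hbound : Tendsto (fun u : ℝ => 2 * u ^ (-(1 / 2) : ℝ)) atTop (𝓝 0) := by
    simpa using (tendsto_rpow_neg_atTop (y := 1 / 2) (by norm_num)).const_mul 2
  refine squeeze_zero' ?_ ?_ hbound
  · filter_upwards [eventually_ge_atTop 0] with u hu
    exact div_nonneg (sinSqDivIntegral_nonneg hu) hu
  · filter_upwards [eventually_gt_atTop 0] with u hu
    calc sinSqDivIntegral u / u ≤ 2 * u ^ (1 / 2 : ℝ) / u := by
          gcongr; exact sinSqDivIntegral_le_rpow hu.le
      _ = 2 * u ^ (-(1 / 2) : ℝ) := by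
          rw [mul_div_assoc, ← rpow_sub_one hu.ne']; norm_num

theorem norm_cos_div_mul_sinSqDivIntegral_le_one (u : ℝ) :
    ‖cos u / u * sinSqDivIntegral u‖ ≤ 1 := by
  rw [Real.norm_eq_abs, div_mul_eq_mul_div, abs_div, abs_mul]
  refine div_le_one_of_le₀ ?_ (abs_nonneg u)
  calc |cos u| * |sinSqDivIntegral u| ≤ 1 * |u| :=
        mul_le_mul (abs_cos_le_one u) (abs_sinSqDivIntegral_le u) (abs_nonneg _) zero_le_one
    _ = |u| := one_mul _

theorem intervalIntegrable_cos_div_mul_sinSqDivIntegral (a b : ℝ) :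
    IntervalIntegrable (fun u => cos u / u * sinSqDivIntegral u) volume a b :=
  (intervalIntegrable_const (c := (1 : ℝ))).mono_fun
    (by have := continuous_sinSqDivIntegral.measurable; fun_prop :
      Measurable fun u : ℝ => cos u / u * sinSqDivIntegral u).aestronglyMeasurable
    (Eventually.of_forall fun u => by simpa using norm_cos_div_mul_sinSqDivIntegral_le_one u)

/-- The improper integral `∫₀^∞ (cos u / u)·(∫₀^u sin²v/v dv) du` converges:
the limit of `∫₀^T` as `T → ∞` exists and is finite. -/
theorem converges_cos_term :
    ∃ L : ℝ,
      Tendsto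
        (fun T : ℝ => ∫ u in (0:ℝ)..T,
          (Real.cos u / u) * ∫ v in (0:ℝ)..u, Real.sin v ^ 2 / v)
        atTop (nhds L) := by
  obtain ⟨L, hL⟩ := exists_tendsto_intervalIntegral_mul_of_integrableOn_deriv (a := 1) (C := 1)
    (fun x _ => hasDerivAt_sin x) continuous_cos.continuousOn (fun x _ => abs_sin_le_one x)
    (fun x hx => hasDerivAt_sinSqDivIntegral_div (one_pos.trans_le hx).ne')
    integrableOn_deriv_sinSqDivIntegral_div tendsto_sinSqDivIntegral_div_atTop
  refine ⟨(∫ u in (0:ℝ)..1, cos u / u * sinSqDivIntegral u) + L,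
    (tendsto_const_nhds.add hL).congr fun T => ?_⟩
  change _ = ∫ u in (0:ℝ)..T, cos u / u * sinSqDivIntegral u
  rw [← intervalIntegral.integral_add_adjacent_intervals
    (intervalIntegrable_cos_div_mul_sinSqDivIntegral 0 1)
    (intervalIntegrable_cos_div_mul_sinSqDivIntegral 1 T)]
  congr 1
  exact intervalIntegral.integral_congr fun u _ => by ring
end
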